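/- arXiv:2403.06489 — 2 statements merged into one kernel-verified Lean document; each statement's English description precedes it below -/
import Mathlib

section
/- Let (Ω, μ) be a probability space, let Y0, Y1 : Ω → ℝ be integrable random variables (the potential outcomes), and let T : Ω → ℝ be a random variable taking only the values 0 and 1 (the treatment indicator) such that T is independent of the pair (Y0, Y1) and p := μ{T = 1} satisfies 0 < p < 1. Define the observed outcome Y_obs = T·Y1 + (1−T)·Y0 and the class-transformed target Z = Y_obs·(T − p)/(p·(1−p)). Then E[Z] = E[Y1] − E[Y0]; that is, the expectation of the class-transformed target equals the average uplift. -/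
/-!
Since `T` only takes the values `0` and `1`, the class-transformed target is the
inverse-propensity-weighted difference `T * Y1 / p - (1 - T) * Y0 / (1 - p)`.
Independence of `T` from the potential outcomes factors the expectations of the two terms as
`E[T * Y1] = p * E[Y1]` and `E[(1 - T) * Y0] = (1 - p) * E[Y0]`, so the weights cancel.
-/

open MeasureTheory ProbabilityTheory

lemma classTransform_eq_inverse_propensity_weighted {t p y0 y1 : ℝ} (ht : t = 0 ∨ t = 1)
    (hp0 : p ≠ 0) (hp1 : p ≠ 1) :
    (t * y1 + (1 - t) * y0) * (t - p) / (p * (1 - p))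
      = t * y1 / p - (1 - t) * y0 / (1 - p) := by
  have hp1' : 1 - p ≠ 0 := sub_ne_zero.mpr hp1.symm
  rcases ht with rfl | rfl <;> field_simp <;> ring

lemma eq_indicator_one_of_zero_or_one {α : Type*} {f : α → ℝ} (hf : ∀ x, f x = 0 ∨ f x = 1) :
    f = {x | f x = 1}.indicator 1 := by
  funext x
  rcases hf x with h | h <;> simp [Set.indicator, h]

section ZeroOne

variable {Ω : Type*} [MeasurableSpace Ω] {μ : Measure Ω} {T : Ω → ℝ}

lemma integral_eq_measureReal_of_zero_or_one (hT : ∀ ω, T ω = 0 ∨ T ω = 1)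
    (hTmeas : Measurable T) :
    ∫ ω, T ω ∂μ = μ.real {ω | T ω = 1} := by
  conv_lhs => rw [eq_indicator_one_of_zero_or_one hT]
  exact integral_indicator_one (hTmeas (measurableSet_singleton 1))

lemma integrable_of_zero_or_one [IsFiniteMeasure μ] (hT : ∀ ω, T ω = 0 ∨ T ω = 1)
    (hTmeas : Measurable T) : Integrable T μ := by
  rw [eq_indicator_one_of_zero_or_one hT]
  exact (integrable_const 1).indicator (hTmeas (measurableSet_singleton 1))

end ZeroOne

/-- The expectation of the class-transformed target `Z = Y_obs * (T - p) / (p * (1 - p))`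
equals the average uplift `E[Y1] - E[Y0]`, for a binary treatment `T` independent of the
pair of potential outcomes `(Y0, Y1)` with `p = μ {T = 1}` and `0 < p < 1`. -/
theorem class_transformed_target_expectation
    {Ω : Type*} [MeasurableSpace Ω] (μ : Measure Ω) [IsProbabilityMeasure μ]
    (Y0 Y1 T : Ω → ℝ)
    (hY0 : Integrable Y0 μ) (hY1 : Integrable Y1 μ)
    (hT : ∀ ω, T ω = 0 ∨ T ω = 1)
    (hTmeas : Measurable T)
    (hindep : IndepFun T (fun ω => (Y0 ω, Y1 ω)) μ)
    (p : ℝ) (hp : p = (μ {ω | T ω = 1}).toReal)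
    (hp0 : 0 < p) (hp1 : p < 1) :
    (∫ ω, ((T ω * Y1 ω + (1 - T ω) * Y0 ω) * (T ω - p) / (p * (1 - p))) ∂μ)
      = (∫ ω, Y1 ω ∂μ) - (∫ ω, Y0 ω ∂μ) := by
  have hTint : Integrable T μ := integrable_of_zero_or_one hT hTmeas
  have hcTint : Integrable (fun ω => 1 - T ω) μ := (integrable_const 1).sub hTint
  have hET : ∫ ω, T ω ∂μ = p := hp ▸ integral_eq_measureReal_of_zero_or_one hT hTmeas
  have hind1 : IndepFun T Y1 μ := hindep.comp measurable_id measurable_snd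
  have hind0 : IndepFun (fun ω => 1 - T ω) Y0 μ :=
    hindep.comp (measurable_const.sub measurable_id) measurable_fst
  have htreated : ∫ ω, T ω * Y1 ω ∂μ = p * ∫ ω, Y1 ω ∂μ := by
    rw [hind1.integral_fun_mul_eq_mul_integral hTint.1 hY1.1, hET]
  have hcontrol : ∫ ω, (1 - T ω) * Y0 ω ∂μ = (1 - p) * ∫ ω, Y0 ω ∂μ := by
    rw [hind0.integral_fun_mul_eq_mul_integral hcTint.1 hY0.1,
      integral_sub (integrable_const 1) hTint, hET, integral_const, probReal_univ, one_smul]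
  calc _ = ∫ ω, (T ω * Y1 ω / p - (1 - T ω) * Y0 ω / (1 - p)) ∂μ :=
        integral_congr_ae <| .of_forall fun ω =>
          classTransform_eq_inverse_propensity_weighted (hT ω) hp0.ne' hp1.ne
    _ = (∫ ω, T ω * Y1 ω ∂μ) / p - (∫ ω, (1 - T ω) * Y0 ω ∂μ) / (1 - p) := by
        have htreated_int : Integrable (fun ω => T ω * Y1 ω) μ := hind1.integrable_mul hTint hY1
        have hcontrol_int : Integrable (fun ω => (1 - T ω) * Y0 ω) μ :=
          hind0.integrable_mul hcTint hY0
        rw [integral_sub (htreated_int.div_const p) (hcontrol_int.div_const (1 - p)),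
          integral_div, integral_div]
    _ = _ := by
        rw [htreated, hcontrol]
        field_simp [hp0.ne', (sub_pos.mpr hp1).ne']
end

section
/- Let (Ω, μ) be a probability space, let 𝒢 be a sub-σ-algebra of the ambient σ-algebra (encoding the features and the social graph), let Y0, Y1 : Ω → ℝ be integrable random variables, and let T : Ω → ℝ take only the values 0 and 1, with p := μ{T = 1} satisfying 0 < p < 1. Assume the σ-algebra generated by T is independent of the σ-algebra generated by 𝒢 together with Y0 and Y1. Define Y_obs = T·Y1 + (1−T)·Y0 and Z = Y_obs·(T − p)/(p·(1−p)). Then, μ-almost surely, the conditional expectation satisfies E[Z ∣ 𝒢] = E[Y1 ∣ 𝒢] − E[Y0 ∣ 𝒢]; that is, the conditional expectation of the class-transformed target given the covariate information equals the conditional uplift. -/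
open MeasureTheory ProbabilityTheory

lemma indep_mono_aux {Ω : Type*} {mΩ : MeasurableSpace Ω} {μ : Measure Ω}
    {m₁ m₂ m₁' m₂' : MeasurableSpace Ω} (h : Indep m₁ m₂ μ)
    (h1 : m₁' ≤ m₁) (h2 : m₂' ≤ m₂) : Indep m₁' m₂' μ := by
  intro t1 t2 ht1 ht2
  exact h t1 t2 (Set.mem_setOf.mpr (h1 _ ht1)) (Set.mem_setOf.mpr (h2 _ ht2))

/-- If `W` is bounded measurable, `Y` integrable, and `σ(W)` is independent of `m ⊔ σ(Y)`,
then `E[W·Y | m] = E[W] · E[Y | m]` a.e. -/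
lemma mul_condexp_aux {Ω : Type*} (m : MeasurableSpace Ω) [mΩ : MeasurableSpace Ω] (μ : Measure Ω)
    [IsProbabilityMeasure μ] (hm : m ≤ mΩ)
    (W Y : Ω → ℝ) (hWmeas : Measurable[mΩ] W) (C : ℝ) (hWbd : ∀ ω, ‖W ω‖ ≤ C)
    (hY : Integrable Y μ)
    (hindep : Indep (MeasurableSpace.comap W inferInstance)
      (m ⊔ MeasurableSpace.comap Y inferInstance) μ) :
    μ[fun ω => W ω * Y ω | m] =ᵐ[μ] fun ω => (∫ x, W x ∂μ) * (μ[Y | m]) ω := by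
  have hYm : Measurable[m ⊔ MeasurableSpace.comap Y inferInstance] Y :=
    Measurable.of_comap_le le_sup_right
  have hWint : Integrable W μ :=
    (integrable_const C).mono' (hWmeas.aestronglyMeasurable (μ := μ)) (Filter.Eventually.of_forall hWbd)
  have hWY : Integrable (fun ω => W ω * Y ω) μ :=
    hY.bdd_mul (hWmeas.aestronglyMeasurable (μ := μ)) (Filter.Eventually.of_forall hWbd)
  symm
  refine ae_eq_condExp_of_forall_setIntegral_eq hm hWY
    (fun s _ _ => (integrable_condExp.const_mul _).integrableOn) ?_ ?_
  · intro s hs _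
    have hsm : MeasurableSet[mΩ] s := hm s hs
    have hsm' : MeasurableSet[m ⊔ MeasurableSpace.comap Y inferInstance] s :=
      (le_sup_left : m ≤ _) s hs
    -- the indicator function
    set g : Ω → ℝ := s.indicator Y with hg
    have hgmeas : Measurable[m ⊔ MeasurableSpace.comap Y inferInstance] g :=
      hYm.indicator hsm'
    have hgint : Integrable g μ := hY.indicator hsm
    have hIF : IndepFun W g μ := indep_mono_aux hindep le_rfl hgmeas.comap_le
    have key : ∫ x, W x * g x ∂μ = (∫ x, W x ∂μ) * ∫ x, g x ∂μ :=
      IndepFun.integral_fun_mul_eq_mul_integral hIF hWint.aestronglyMeasurable hgint.aestronglyMeasurable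
    have h1 : ∫ x in s, W x * Y x ∂μ = ∫ x, W x * g x ∂μ := by
      rw [← integral_indicator hsm]
      congr 1
      ext x
      by_cases hx : x ∈ s <;> simp [hg, hx]
    have h2 : ∫ x, g x ∂μ = ∫ x in s, Y x ∂μ := integral_indicator hsm
    rw [integral_const_mul, setIntegral_condExp hm hY hs, h1, key, h2]
  · exact StronglyMeasurable.aestronglyMeasurable
      (stronglyMeasurable_const.mul stronglyMeasurable_condExp)

/-- The conditional expectation of the class-transformed target
`Z = Y_obs * (T - p) / (p * (1 - p))` given a sub-σ-algebra `m` (encoding the features and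
the social graph) equals the conditional uplift `E[Y1 ∣ m] - E[Y0 ∣ m]` almost surely,
provided the σ-algebra generated by the binary treatment `T` is independent of the
σ-algebra generated by `m` together with `Y0` and `Y1`, and `p = μ {T = 1}` with `0 < p < 1`. -/
theorem class_transformed_target_condexp
    {Ω : Type*} (m : MeasurableSpace Ω) [mΩ : MeasurableSpace Ω] (μ : Measure Ω) [IsProbabilityMeasure μ]
    (hm : m ≤ mΩ)
    (Y0 Y1 T : Ω → ℝ)
    (hY0 : Integrable Y0 μ) (hY1 : Integrable Y1 μ)
    (hT : ∀ ω, T ω = 0 ∨ T ω = 1)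
    (hTmeas : Measurable T)
    (p : ℝ) (hp : p = (μ {ω | T ω = 1}).toReal)
    (hp0 : 0 < p) (hp1 : p < 1)
    (hindep : Indep (MeasurableSpace.comap T inferInstance)
      (m ⊔ MeasurableSpace.comap Y0 inferInstance ⊔ MeasurableSpace.comap Y1 inferInstance) μ) :
    μ[fun ω => ((T ω * Y1 ω + (1 - T ω) * Y0 ω) * (T ω - p) / (p * (1 - p))) | m]
      =ᵐ[μ] μ[Y1 | m] - μ[Y0 | m] := by
  letI : MeasurableSpace Ω := mΩ
  have hp0' : p ≠ 0 := ne_of_gt hp0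
  have hp1' : (1 : ℝ) - p ≠ 0 := by linarith
  -- W := T, W' := 1 - T
  have hTbd : ∀ ω, ‖T ω‖ ≤ 1 := by
    intro ω; rcases hT ω with h | h <;> simp [h]
  have hT'meas : Measurable[mΩ] (fun ω => 1 - T ω) := measurable_const.sub hTmeas
  have hT'bd : ∀ ω, ‖1 - T ω‖ ≤ 1 := by
    intro ω; rcases hT ω with h | h <;> simp [h]
  -- E[T] = p
  have hTind : T = Set.indicator {ω | T ω = 1} (fun _ => (1 : ℝ)) := by
    ext ω
    rcases hT ω with h | h
    · simp [Set.indicator, h, Set.mem_setOf_eq]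
    · simp [Set.indicator, h, Set.mem_setOf_eq]
  have hTmeasΩ : Measurable[mΩ] T := hTmeas
  have hT'measΩ : Measurable[mΩ] (fun ω => 1 - T ω) := hT'meas
  have hsmeas : MeasurableSet[mΩ] {ω | T ω = 1} := hTmeasΩ (measurableSet_singleton 1)
  have hET : ∫ x, T x ∂μ = p := by
    conv_lhs => rw [hTind]
    rw [integral_indicator hsmeas, setIntegral_const, hp]
    simp
    rfl
  have hET' : ∫ x, (1 - T x) ∂μ = 1 - p := by
    have hTint : Integrable T μ :=
      (integrable_const (1:ℝ)).mono' (hTmeasΩ.aestronglyMeasurable (μ := μ))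
        (Filter.Eventually.of_forall hTbd)
    rw [integral_sub (integrable_const 1) hTint, integral_const, hET]
    simp
  -- independence pieces
  have hindep1 : Indep (MeasurableSpace.comap T inferInstance)
      (m ⊔ MeasurableSpace.comap Y1 inferInstance) μ := by
    refine indep_mono_aux hindep le_rfl ?_
    exact sup_le (le_sup_of_le_left le_sup_left) le_sup_right
  have hindep0 : Indep (MeasurableSpace.comap (fun ω => 1 - T ω) inferInstance)
      (m ⊔ MeasurableSpace.comap Y0 inferInstance) μ := by
    refine indep_mono_aux hindep ?_ le_sup_left
    have hTm' : Measurable[MeasurableSpace.comap T inferInstance] T :=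
      Measurable.of_comap_le le_rfl
    have h2 : Measurable[MeasurableSpace.comap T inferInstance] (fun ω => 1 - T ω) :=
      hTm'.const_sub 1
    exact h2.comap_le
  have h1 := mul_condexp_aux m μ hm T Y1 hTmeasΩ 1 hTbd hY1 hindep1
  have h0 := mul_condexp_aux m μ hm (fun ω => 1 - T ω) Y0 hT'measΩ 1 hT'bd hY0 hindep0
  -- rewrite the integrand
  have hfun : (fun ω => ((T ω * Y1 ω + (1 - T ω) * Y0 ω) * (T ω - p) / (p * (1 - p))))
      = fun ω => p⁻¹ • (T ω * Y1 ω) - (1 - p)⁻¹ • ((1 - T ω) * Y0 ω) := by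
    ext ω
    rcases hT ω with h | h
    · rw [h]; simp only [smul_eq_mul]; field_simp; ring
    · rw [h]; simp only [smul_eq_mul]; field_simp; ring
  have hTY1int : Integrable (fun ω => T ω * Y1 ω) μ :=
    hY1.bdd_mul (hTmeasΩ.aestronglyMeasurable (μ := μ)) (Filter.Eventually.of_forall hTbd)
  have hTY0int : Integrable (fun ω => (1 - T ω) * Y0 ω) μ :=
    hY0.bdd_mul (hT'measΩ.aestronglyMeasurable (μ := μ)) (Filter.Eventually.of_forall hT'bd)
  rw [hfun]
  calc μ[fun ω => p⁻¹ • (T ω * Y1 ω) - (1 - p)⁻¹ • ((1 - T ω) * Y0 ω) | m]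
      =ᵐ[μ] μ[fun ω => p⁻¹ • (T ω * Y1 ω) | m] - μ[fun ω => (1 - p)⁻¹ • ((1 - T ω) * Y0 ω) | m] :=
        condExp_sub (by simpa [smul_eq_mul] using hTY1int.const_mul p⁻¹)
          (by simpa [smul_eq_mul] using hTY0int.const_mul (1 - p)⁻¹) _
    _ =ᵐ[μ] μ[Y1 | m] - μ[Y0 | m] := by
        have e1 : μ[fun ω => p⁻¹ • (T ω * Y1 ω) | m] =ᵐ[μ] μ[Y1 | m] := by
          have := condExp_smul (μ := μ) (m := m) p⁻¹ (fun ω => T ω * Y1 ω)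
          refine this.trans ?_
          filter_upwards [h1] with ω hω
          simp only [Pi.smul_apply, smul_eq_mul, hω, hET]
          field_simp
        have e0 : μ[fun ω => (1 - p)⁻¹ • ((1 - T ω) * Y0 ω) | m] =ᵐ[μ] μ[Y0 | m] := by
          have := condExp_smul (μ := μ) (m := m) (1 - p)⁻¹ (fun ω => (1 - T ω) * Y0 ω)
          refine this.trans ?_
          filter_upwards [h0] with ω hω
          simp only [Pi.smul_apply, smul_eq_mul, hω, hET']
          field_simp
        filter_upwards [e1, e0] with ω h1' h0'
        simp only [Pi.sub_apply]
        rw [h1', h0']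
end
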